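/- Let d, k ≥ 2. For C = (x_1,…,x_k) and C′ = (x′_1,…,x′_k) in F(ℝ,k) ⊂ F(ℝ^d,k), define Γ^{C,C′}(t) = (Γ^{C,C′}_1(t),…,Γ^{C,C′}_k(t)) by Γ^{C,C′}_i(t) = x_i + 3·t·i·e_2 for 0 ≤ t ≤ 1/3, Γ^{C,C′}_i(t) = x_i + i·e_2 + (3t−1)(x′_i − x_i) for 1/3 ≤ t ≤ 2/3, and Γ^{C,C′}_i(t) = x′_i + i(3−3t)·e_2 for 2/3 ≤ t ≤ 1. Then Γ^{C,C′}(t) ∈ F(ℝ^d,k) for every t ∈ [0,1], Γ^{C,C′}(0) = C and Γ^{C,C′}(1) = C′, and the resulting map Γ : F(ℝ,k) × F(ℝ,k) → P(F(ℝ^d,k)) is a continuous section of e_2 over F(ℝ,k) × F(ℝ,k) with values in paths in F(ℝ^d,k). -/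

import Mathlib

/-!
For `0 < t < 1` the second coordinate of the `i`-th point of `Γ^{C,C'}(t)` is `h(t) · i` for a
height `h(t) > 0` that does not depend on `i` (this uses that `C` and `C'` lie on the first
axis), so the `k` points sit at pairwise different heights; at `t = 0` and `t = 1` the
configuration is `C`, resp. `C'`. The three affine pieces agree at `t = 1/3` and `t = 2/3`,
so `Γ` is jointly continuous in `(C, C', t)`, which makes the section continuous for the
compact-open topology.
-/

open unitInterval

noncomputable section

/-- Euclidean space ℝ^d. -/
abbrev E (d : ℕ) : Type := EuclideanSpace ℝ (Fin d)

/-- The ordered configuration space F(ℝ^d, k) of k distinct points in ℝ^d,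
viewed as the subspace of (ℝ^d)^k of injective tuples. -/
def Conf (d k : ℕ) : Set (Fin k → E d) := {x | Function.Injective x}

/-- The time i/(n-1) ∈ [0,1] at which the i-th configuration is visited. -/
def eTime (n : ℕ) (i : Fin n) : unitInterval :=
  Set.projIcc 0 1 zero_le_one ((i : ℝ) / ((n : ℝ) - 1))

/-- The evaluation map e_n : P(X) → X^n,
e_n(γ) = (γ(0), γ(1/(n-1)), …, γ((n-2)/(n-1)), γ(1)). -/
def evalMap {X : Type*} [TopologicalSpace X] (n : ℕ) (γ : C(unitInterval, X)) : Fin n → X :=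
  fun i => γ (eTime n i)

/-- `A ⊆ X^n` admits a continuous section of the evaluation map e_n. -/
def HasSec {X : Type*} [TopologicalSpace X] (n : ℕ) (A : Set (Fin n → X)) : Prop :=
  ∃ s : A → C(unitInterval, X), Continuous s ∧ ∀ a : A, evalMap n (s a) = (a : Fin n → X)

/-- The second standard basis vector e_2 of ℝ^d (d ≥ 2). -/
def e2v (d : ℕ) (hd : 2 ≤ d) : E d := EuclideanSpace.single ⟨1, by omega⟩ (1 : ℝ)

/-- A tuple lies on the axis ℝ ⊂ ℝ^d, embedded via x ↦ (x,0,…,0). -/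
def OnAxis {d k : ℕ} (x : Fin k → E d) : Prop :=
  ∀ i : Fin k, ∀ j : Fin d, (j : ℕ) ≠ 0 → x i j = 0

/-- The i-th component of the path Γ^{C,C'} (the index i of the paper, ranging
over 1,…,k, corresponds to (i:ℕ)+1 for i : Fin k):
x_i + 3ti·e_2 on [0,1/3]; x_i + i·e_2 + (3t-1)(x'_i - x_i) on [1/3,2/3];
x'_i + i(3-3t)·e_2 on [2/3,1]. -/
def gammaSeg {d k : ℕ} (hd : 2 ≤ d) (C C' : Fin k → E d) (i : Fin k) (t : ℝ) : E d :=
  if t ≤ 1 / 3 then C i + (3 * t * ((i : ℝ) + 1)) • e2v d hd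
  else if t ≤ 2 / 3 then C i + ((i : ℝ) + 1) • e2v d hd + (3 * t - 1) • (C' i - C i)
  else C' i + (((i : ℝ) + 1) * (3 - 3 * t)) • e2v d hd

def liftHeight (t : ℝ) : ℝ :=
  if t ≤ 1 / 3 then 3 * t else if t ≤ 2 / 3 then 1 else 3 - 3 * t

lemma liftHeight_pos {t : ℝ} (ht : t ∈ Set.Ioo (0 : ℝ) 1) : 0 < liftHeight t := by
  obtain ⟨h0, h1⟩ := ht
  unfold liftHeight
  split_ifs <;> linarith

lemma e2v_apply_one {d : ℕ} (hd : 2 ≤ d) : e2v d hd ⟨1, by omega⟩ = 1 := by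
  simp [e2v]

lemma gammaSeg_apply_one {d k : ℕ} (hd : 2 ≤ d) {C C' : Fin k → E d}
    (hC : OnAxis C) (hC' : OnAxis C') (i : Fin k) (t : ℝ) :
    gammaSeg hd C C' i t ⟨1, by omega⟩ = liftHeight t * ((i : ℝ) + 1) := by
  have h0 : C i ⟨1, by omega⟩ = 0 := hC i _ one_ne_zero
  have h0' : C' i ⟨1, by omega⟩ = 0 := hC' i _ one_ne_zero
  unfold gammaSeg liftHeight
  split_ifs <;> simp [h0, h0', e2v_apply_one hd, mul_comm]

lemma gammaSeg_zero {d k : ℕ} (hd : 2 ≤ d) (C C' : Fin k → E d) (i : Fin k) :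
    gammaSeg hd C C' i 0 = C i := by
  unfold gammaSeg; norm_num

lemma gammaSeg_one {d k : ℕ} (hd : 2 ≤ d) (C C' : Fin k → E d) (i : Fin k) :
    gammaSeg hd C C' i 1 = C' i := by
  unfold gammaSeg; norm_num

lemma gammaSeg_injective_of_mem_Ioo {d k : ℕ} (hd : 2 ≤ d) {C C' : Fin k → E d}
    (hC : OnAxis C) (hC' : OnAxis C') {t : ℝ} (ht : t ∈ Set.Ioo (0 : ℝ) 1) :
    Function.Injective fun i => gammaSeg hd C C' i t := by
  intro i i' h
  have hheight := congrArg (fun v : E d => v ⟨1, by omega⟩) h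
  simp only [gammaSeg_apply_one hd hC hC'] at hheight
  have hcast : ((i : ℕ) : ℝ) = (i' : ℕ) := by
    linarith [mul_left_cancel₀ (liftHeight_pos ht).ne' hheight]
  exact Fin.ext (Nat.cast_injective hcast)

lemma gammaSeg_mem_conf {d k : ℕ} (hd : 2 ≤ d) {C C' : Fin k → E d}
    (hC : C ∈ Conf d k) (hC' : C' ∈ Conf d k) (hA : OnAxis C) (hA' : OnAxis C')
    {t : ℝ} (ht : t ∈ Set.Icc (0 : ℝ) 1) :
    (fun i => gammaSeg hd C C' i t) ∈ Conf d k := by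
  rcases eq_or_lt_of_le ht.1 with rfl | h0
  · simpa only [gammaSeg_zero] using hC
  rcases eq_or_lt_of_le ht.2 with rfl | h1
  · simpa only [gammaSeg_one] using hC'
  exact gammaSeg_injective_of_mem_Ioo hd hA hA' ⟨h0, h1⟩

lemma continuous_gammaSeg {d k : ℕ} (hd : 2 ≤ d) :
    Continuous fun q : ((Fin k → E d) × (Fin k → E d)) × ℝ =>
      fun i => gammaSeg hd q.1.1 q.1.2 i q.2 := by
  refine continuous_pi fun i => ?_
  unfold gammaSeg
  refine Continuous.if_le (by fun_prop) ?_ (by fun_prop) (by fun_prop) ?_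
  · refine Continuous.if_le (by fun_prop) (by fun_prop) (by fun_prop) (by fun_prop) ?_
    intro q hq
    rw [hq]
    norm_num
    module
  · intro q hq
    rw [hq, if_pos (by norm_num)]
    norm_num

/-- The pairs `(C, C')` of configurations on the first axis, i.e. `F(ℝ,k) × F(ℝ,k)`. -/
abbrev AxisConfPairs (d k : ℕ) : Type :=
  {p : (Fin k → E d) × (Fin k → E d) // p.1 ∈ Conf d k ∧ p.2 ∈ Conf d k ∧ OnAxis p.1 ∧ OnAxis p.2}

def gammaSection {d k : ℕ} (hd : 2 ≤ d) (p : AxisConfPairs d k) : C(I, Conf d k) where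
  toFun t := ⟨fun i => gammaSeg hd p.1.1 p.1.2 i t,
    gammaSeg_mem_conf hd p.2.1 p.2.2.1 p.2.2.2.1 p.2.2.2.2 t.2⟩
  continuous_toFun := ((continuous_gammaSeg hd).comp
    (show Continuous fun t : I => (p.1, (t : ℝ)) by fun_prop)).subtype_mk _

lemma continuous_gammaSection {d k : ℕ} (hd : 2 ≤ d) :
    Continuous (gammaSection (k := k) hd) := by
  apply ContinuousMap.continuous_of_continuous_uncurry
  exact ((continuous_gammaSeg hd).comp
    (show Continuous fun x : AxisConfPairs d k × I => (x.1.1, (x.2 : ℝ)) by fun_prop)).subtype_mk _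

theorem stmt4 (d k : ℕ) (hd : 2 ≤ d) :
    (∀ C C' : Fin k → E d, C ∈ Conf d k → C' ∈ Conf d k → OnAxis C → OnAxis C' →
      (∀ t ∈ Set.Icc (0 : ℝ) 1, (fun i => gammaSeg hd C C' i t) ∈ Conf d k) ∧
      (∀ i, gammaSeg hd C C' i 0 = C i) ∧ (∀ i, gammaSeg hd C C' i 1 = C' i)) ∧
    ∃ s : {p : (Fin k → E d) × (Fin k → E d) //
            p.1 ∈ Conf d k ∧ p.2 ∈ Conf d k ∧ OnAxis p.1 ∧ OnAxis p.2} →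
          C(unitInterval, ↥(Conf d k)),
      Continuous s ∧
      (∀ p, ∀ t : unitInterval, ∀ i : Fin k,
        ((s p t : Fin k → E d) i) = gammaSeg hd p.1.1 p.1.2 i (t : ℝ)) ∧
      (∀ p, (s p 0 : Fin k → E d) = p.1.1 ∧ (s p 1 : Fin k → E d) = p.1.2) :=
  ⟨fun C C' hC hC' hA hA' =>
      ⟨fun _ ht => gammaSeg_mem_conf hd hC hC' hA hA' ht, gammaSeg_zero hd C C',
        gammaSeg_one hd C C'⟩,
    gammaSection hd, continuous_gammaSection hd, fun _ _ _ => rfl,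
    fun p => ⟨funext fun i => gammaSeg_zero hd p.1.1 p.1.2 i,
      funext fun i => gammaSeg_one hd p.1.1 p.1.2 i⟩⟩
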